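/- For N ≥ 1 and 1 ≤ h ≤ N, the number of Dyck paths of semilength N with maximum height at most h is given by the reflection formula Σ_{k∈ℤ} [C(2N, N - k(h+2))₊ - C(2N, N + k(h+2) + 1)₊], and this quantity is monotone nondecreasing in h, reaching the Catalan number C(2N,N)/(N+1) when h ≥ N. -/

import Mathlib

/-- Binomial coefficient `C(n, k)` with integer lower index, taken to be `0`
when the lower index is negative or exceeds the upper index. -/
def chooseZ (n : ℕ) (k : ℤ) : ℤ :=
  if 0 ≤ k ∧ k ≤ (n : ℤ) then (n.choose k.toNat : ℤ) else 0

/-- The number of up-steps among the first `j` steps of the lattice path `p`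
(`true` = up-step `(0,1)`, `false` = right-step `(1,0)`); after `j` steps the
path is at the point `(j - ups p j, ups p j)`. -/
def ups {len : ℕ} (p : Fin len → Bool) (j : ℕ) : ℕ :=
  (Finset.univ.filter (fun i : Fin len => (i : ℕ) < j ∧ p i = true)).card

/-- Dyck paths of semilength `N` with maximum height `max_j S_j ≤ h`, where
`S_j = (#ups) - (#rights)` among the first `j` steps. -/
def dyckBdd (N h : ℕ) : Finset (Fin (2 * N) → Bool) :=
  Finset.univ.filter (fun p => ups p (2 * N) = N ∧
    (∀ j ≤ 2 * N, j ≤ 2 * ups p j) ∧ ∀ j ≤ 2 * N, 2 * ups p j ≤ j + h)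

/- ups basics -/
lemma ups_eq_sum {len : ℕ} (p : Fin len → Bool) (j : ℕ) :
    ups p j = ∑ i : Fin len, if (i : ℕ) < j ∧ p i = true then 1 else 0 := by
  rw [ups, Finset.card_filter]

lemma ups_zero {len : ℕ} (p : Fin len → Bool) : ups p 0 = 0 := by
  simp [ups]

lemma ups_snoc {n : ℕ} (q : Fin n → Bool) (b : Bool) {j : ℕ} (hj : j ≤ n) :
    ups (Fin.snoc q b) j = ups q j := by
  rw [ups_eq_sum, ups_eq_sum, Fin.sum_univ_castSucc]
  have hlast : ¬(n < j) := by omega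
  simp [Fin.snoc_castSucc, Fin.val_last, hlast]

lemma ups_snoc_end {n : ℕ} (q : Fin n → Bool) (b : Bool) :
    ups (Fin.snoc q b) (n + 1) = ups q n + (if b = true then 1 else 0) := by
  rw [ups_eq_sum, ups_eq_sum, Fin.sum_univ_castSucc]
  have hlast : ((Fin.last n : ℕ) < n + 1) := by simp [Fin.val_last]
  simp only [Fin.snoc_castSucc, Fin.snoc_last, Fin.coe_castSucc, hlast, true_and]
  congr 1
  apply Finset.sum_congr rfl
  intro i _
  have h1 : (i : ℕ) < n + 1 := Nat.lt_succ_of_lt i.isLt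
  have h2 : (i : ℕ) < n := i.isLt
  simp [h1, h2]

lemma ups_le {len : ℕ} (p : Fin len → Bool) (j : ℕ) : ups p j ≤ j := by
  have : ups p j ≤ (Finset.range j).card := by
    apply Finset.card_le_card_of_injOn (fun i : Fin len => (i : ℕ))
    · intro a ha
      simp only [ups, Finset.coe_filter, Finset.mem_coe, Finset.mem_filter, Set.mem_setOf_eq] at ha ⊢
      simpa [Finset.mem_range] using ha.2.1
    · intro a _ b _ hab
      exact Fin.val_injective hab
  simpa using this

lemma ups_mono {len : ℕ} (p : Fin len → Bool) {j j' : ℕ} (h : j ≤ j') :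
    ups p j ≤ ups p j' := by
  apply Finset.card_le_card
  apply Finset.monotone_filter_right
  intro i _ hi
  exact ⟨lt_of_lt_of_le hi.1 h, hi.2⟩

lemma ups_total {len : ℕ} (p : Fin len → Bool) {j : ℕ} (h : len ≤ j) :
    ups p j = ups p len := by
  unfold ups
  congr 1
  apply Finset.filter_congr
  intro i _
  have h1 : (i : ℕ) < j := lt_of_lt_of_le i.isLt h
  simp [h1, i.isLt]

lemma chooseZ_eq (n : ℕ) (k : ℤ) :
    chooseZ n k = if 0 ≤ k then (n.choose k.toNat : ℤ) else 0 := by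
  unfold chooseZ
  by_cases h0 : 0 ≤ k
  · by_cases h1 : k ≤ (n : ℤ)
    · simp [h0, h1]
    · have : n < k.toNat := by omega
      simp [h0, h1, Nat.choose_eq_zero_of_lt this]
  · simp [h0]

lemma chooseZ_pascal (n : ℕ) (k : ℤ) :
    chooseZ (n + 1) k = chooseZ n (k - 1) + chooseZ n k := by
  rw [chooseZ_eq, chooseZ_eq, chooseZ_eq]
  by_cases h0 : 0 ≤ k
  · by_cases h1 : 0 ≤ k - 1
    · have hk : k.toNat = (k - 1).toNat + 1 := by omega
      simp only [h0, h1, if_true, hk, Nat.choose_succ_succ']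
      push_cast; ring
    · have hk : k = 0 := by omega
      simp [hk]
  · have h1 : ¬ (0 ≤ k - 1) := by omega
    simp [h0, h1]
    intro hk; omega

lemma chooseZ_symm (n : ℕ) (k : ℤ) : chooseZ n k = chooseZ n ((n : ℤ) - k) := by
  unfold chooseZ
  by_cases h0 : 0 ≤ k ∧ k ≤ (n : ℤ)
  · have h1 : 0 ≤ (n : ℤ) - k ∧ (n : ℤ) - k ≤ (n : ℤ) := by omega
    have h2 : ((n : ℤ) - k).toNat = n - k.toNat := by omega
    have h3 : k.toNat ≤ n := by omega
    simp only [h0, h1, if_true, h2]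
    rw [Nat.choose_symm h3]
  · have h1 : ¬ (0 ≤ (n : ℤ) - k ∧ (n : ℤ) - k ≤ (n : ℤ)) := by omega
    rw [if_neg h0, if_neg h1]

lemma int_mul_cases (k c : ℤ) (hc : 0 < c) : k = 0 ∨ k * c ≤ -c ∨ c ≤ k * c := by
  rcases lt_trichotomy k 0 with h | h | h
  · right; left
    have : k ≤ -1 := by omega
    nlinarith
  · left; exact h
  · right; right
    have : 1 ≤ k := by omega
    nlinarith

lemma summable_chooseZ (n : ℕ) (a c : ℤ) (hc : 1 ≤ c) :
    Summable (fun k : ℤ => chooseZ n (a + k * c)) := by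
  apply summable_of_ne_finset_zero (s := Finset.Icc (-(n + |a|)) ((n : ℤ) + |a|))
  intro k hk
  simp only [Finset.mem_Icc, not_and_or, not_le] at hk
  unfold chooseZ
  rw [if_neg]
  rintro ⟨h1, h2⟩
  have hn : (0:ℤ) ≤ (n : ℤ) := Int.natCast_nonneg n
  have hb1 : -((n : ℤ) + |a|) ≤ k * c := by
    have := le_abs_self a; linarith
  have hb2 : k * c ≤ (n : ℤ) + |a| := by
    have := neg_abs_le a; linarith
  have hk1 : |k| ≤ |k * c| := by
    rw [abs_mul, abs_of_pos (by linarith : (0:ℤ) < c)]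
    exact le_mul_of_one_le_right (abs_nonneg k) hc
  have hk2 : |k * c| ≤ (n : ℤ) + |a| := abs_le.mpr ⟨hb1, hb2⟩
  have := le_abs_self k
  have := neg_abs_le k
  rcases hk with h | h <;> linarith


noncomputable def Rr (hh n : ℕ) (m : ℤ) : ℤ :=
  ∑' k : ℤ, (chooseZ n (m + k * ((hh : ℤ) + 2))
    - chooseZ n ((n : ℤ) - 1 - m + k * ((hh : ℤ) + 2)))

lemma summable_aux (hh n : ℕ) (a : ℤ) :
    Summable (fun k : ℤ => chooseZ n (a + k * ((hh : ℤ) + 2))) :=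
  summable_chooseZ n a _ (by omega)

lemma Rr_pascal (hh n : ℕ) (m : ℤ) :
    Rr hh (n + 1) m = Rr hh n m + Rr hh n (m - 1) := by
  unfold Rr
  rw [← Summable.tsum_add ((summable_aux hh n m).sub (summable_aux hh n _))
      ((summable_aux hh n (m-1)).sub (summable_aux hh n _))]
  apply tsum_congr
  intro k
  rw [chooseZ_pascal, chooseZ_pascal]
  have e1 : m + k * ((hh : ℤ) + 2) - 1 = m - 1 + k * ((hh : ℤ) + 2) := by ring
  have e2 : ((n:ℕ)+1 : ℤ) - 1 - m + k * ((hh : ℤ) + 2) - 1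
      = (n : ℤ) - 1 - m + k * ((hh : ℤ) + 2) := by push_cast; ring
  have e3 : (((n:ℕ)+1 : ℕ) : ℤ) - 1 - m + k * ((hh : ℤ) + 2)
      = (n : ℤ) - 1 - (m - 1) + k * ((hh : ℤ) + 2) := by push_cast; ring
  rw [e3] at *
  push_cast
  ring_nf

lemma Rr_zero_low (hh n : ℕ) (m : ℤ) (hm : 2 * m = (n : ℤ) - 1) :
    Rr hh n m = 0 := by
  unfold Rr
  have e : (n : ℤ) - 1 - m = m := by omega
  rw [e]
  simp

lemma Rr_zero_high (hh n : ℕ) (m : ℤ) (hm : 2 * m = (n : ℤ) + hh + 1) :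
    Rr hh n m = 0 := by
  unfold Rr
  have e : ∀ k : ℤ, (n : ℤ) - 1 - m + k * ((hh : ℤ) + 2)
      = m + (k - 1) * ((hh : ℤ) + 2) := by
    intro k
    have : (n : ℤ) - 1 - m = m - ((hh : ℤ) + 2) := by omega
    rw [this]; ring
  calc (∑' k : ℤ, (chooseZ n (m + k * ((hh : ℤ) + 2))
        - chooseZ n ((n : ℤ) - 1 - m + k * ((hh : ℤ) + 2))))
      = (∑' k : ℤ, chooseZ n (m + k * ((hh : ℤ) + 2)))
        - ∑' k : ℤ, chooseZ n (m + (k - 1) * ((hh : ℤ) + 2)) := by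
        rw [← Summable.tsum_sub (summable_aux hh n m)]
        · apply tsum_congr; intro k; rw [e k]
        · have : (fun k : ℤ => chooseZ n (m + (k - 1) * ((hh : ℤ) + 2)))
              = fun k : ℤ => chooseZ n ((m - ((hh : ℤ) + 2)) + k * ((hh : ℤ) + 2)) := by
            funext k; ring_nf
          rw [this]
          exact summable_aux hh n _
    _ = 0 := by
        have h2 : (∑' k : ℤ, chooseZ n (m + (k - 1) * ((hh : ℤ) + 2)))
            = ∑' k : ℤ, chooseZ n (m + k * ((hh : ℤ) + 2)) := by
          have := (Equiv.subRight (1 : ℤ)).tsum_eq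
            (fun k => chooseZ n (m + k * ((hh : ℤ) + 2)))
          simpa [Equiv.subRight_apply] using this
        rw [h2]
        exact sub_self _

lemma chooseZ_zero_left (j : ℤ) : chooseZ 0 j = if j = 0 then 1 else 0 := by
  unfold chooseZ
  by_cases h : j = 0
  · simp [h]
  · rw [if_neg (by omega), if_neg h]

lemma Rr_base (hh : ℕ) (m : ℤ) (h0 : 0 ≤ m) (h2 : 2 * m ≤ (hh : ℤ)) :
    Rr hh 0 m = if m = 0 then 1 else 0 := by
  have hc : (0 : ℤ) < (hh : ℤ) + 2 := by omega
  by_cases hm : m = 0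
  · subst hm
    rw [if_pos rfl]
    unfold Rr
    rw [tsum_eq_single 0]
    · norm_num [chooseZ_zero_left]
    · intro k hk
      rcases int_mul_cases k ((hh : ℤ) + 2) hc with h | h | h
      · exact absurd h hk
      · rw [chooseZ_zero_left, chooseZ_zero_left, if_neg (by intro hx; linarith),
          if_neg (by push_cast; intro hx; linarith)]
        ring
      · rw [chooseZ_zero_left, chooseZ_zero_left, if_neg (by intro hx; linarith),
          if_neg (by push_cast; intro hx; linarith)]
        ring
  · rw [if_neg hm]
    unfold Rr
    have hzero : ∀ k : ℤ, (chooseZ 0 (m + k * ((hh : ℤ) + 2))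
        - chooseZ 0 ((0 : ℕ) - 1 - m + k * ((hh : ℤ) + 2))) = 0 := by
      intro k
      have hm1 : 1 ≤ m := by omega
      rcases int_mul_cases k ((hh : ℤ) + 2) hc with h | h | h
      · subst h
        rw [chooseZ_zero_left, chooseZ_zero_left, if_neg (by push_cast; omega),
          if_neg (by push_cast; omega)]
        ring
      · rw [chooseZ_zero_left, chooseZ_zero_left, if_neg (by intro hx; linarith),
          if_neg (by push_cast; intro hx; linarith)]
        ring
      · rw [chooseZ_zero_left, chooseZ_zero_left, if_neg (by intro hx; linarith),
          if_neg (by push_cast; intro hx; linarith)]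
        ring
    rw [tsum_congr hzero]
    exact tsum_zero


def Wc (hh n m : ℕ) : ℕ :=
  (Finset.univ.filter (fun p : Fin n → Bool => ups p n = m ∧
    (∀ j ≤ n, j ≤ 2 * ups p j) ∧ ∀ j ≤ n, 2 * ups p j ≤ j + hh)).card

lemma Wc_base (hh m : ℕ) : Wc hh 0 m = if m = 0 then 1 else 0 := by
  unfold Wc
  by_cases hm : m = 0
  · subst hm
    rw [if_pos rfl, Finset.filter_true_of_mem]
    · simp
    · intro p _
      refine ⟨ups_zero p, ?_, ?_⟩ <;> (intro j hj; interval_cases j <;> simp [ups_zero])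
  · rw [if_neg hm, Finset.card_eq_zero, Finset.filter_eq_empty_iff]
    intro p _
    rw [ups_zero p]
    intro hcon
    exact hm hcon.1.symm

lemma Wc_zero_low (hh n m : ℕ) (h : 2 * m < n) : Wc hh n m = 0 := by
  unfold Wc
  rw [Finset.card_eq_zero, Finset.filter_eq_empty_iff]
  rintro p _ ⟨h1, h2, _⟩
  have := h2 n le_rfl
  rw [h1] at this
  omega

lemma Wc_zero_high (hh n m : ℕ) (h : n + hh < 2 * m) : Wc hh n m = 0 := by
  unfold Wc
  rw [Finset.card_eq_zero, Finset.filter_eq_empty_iff]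
  rintro p _ ⟨h1, _, h3⟩
  have := h3 n le_rfl
  rw [h1] at this
  omega

lemma Wc_rec (hh n m : ℕ) (hyp1 : n + 1 ≤ 2 * (m + 1)) (hyp2 : 2 * (m + 1) ≤ n + 1 + hh) :
    Wc hh (n + 1) (m + 1) = Wc hh n (m + 1) + Wc hh n m := by
  classical
  rw [Nat.add_comm (Wc hh n (m+1))]
  unfold Wc
  rw [← Finset.card_filter_add_card_filter_not
    (p := fun p : Fin (n+1) → Bool => p (Fin.last n) = true), Finset.filter_filter,
    Finset.filter_filter]
  have hups : ∀ (p : Fin (n+1) → Bool) (j : ℕ), j ≤ n → ups (Fin.init p) j = ups p j := by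
    intro p j hj
    conv_rhs => rw [← Fin.snoc_init_self p]
    rw [ups_snoc _ _ hj]
  have hend : ∀ (p : Fin (n+1) → Bool),
      ups p (n+1) = ups (Fin.init p) n + (if p (Fin.last n) = true then 1 else 0) := by
    intro p
    conv_lhs => rw [← Fin.snoc_init_self p]
    rw [ups_snoc_end]
  congr 1
  -- first: last step is up (true): maps to Wc hh n m
  · apply Finset.card_bij' (fun p _ => Fin.init p) (fun q _ => Fin.snoc q true)
    · -- hj
      rintro q hq
      rw [Finset.mem_filter] at hq
      obtain ⟨-, h1, h2, h3⟩ := hq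
      rw [Finset.mem_filter]
      refine ⟨Finset.mem_univ _, ⟨?_, ?_, ?_⟩, Fin.snoc_last _ _⟩
      · rw [ups_snoc_end, h1, if_pos rfl]
      · intro j hj
        rcases Nat.lt_succ_iff_lt_or_eq.mp (Nat.lt_succ_of_le hj) with hj' | hj'
        · rw [ups_snoc _ _ (by omega)]
          exact h2 j (by omega)
        · subst hj'
          rw [ups_snoc_end, h1, if_pos rfl]
          omega
      · intro j hj
        rcases Nat.lt_succ_iff_lt_or_eq.mp (Nat.lt_succ_of_le hj) with hj' | hj'
        · rw [ups_snoc _ _ (by omega)]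
          exact h3 j (by omega)
        · subst hj'
          rw [ups_snoc_end, h1, if_pos rfl]
          omega

    · -- left_inv
      intro p hp
      rw [Finset.mem_filter] at hp
      have := Fin.snoc_init_self p
      rwa [hp.2.2] at this

    · -- right_inv
      intro q _
      exact Fin.init_snoc _ _

    · -- hi
      rintro p hp
      rw [Finset.mem_filter] at hp
      obtain ⟨-, ⟨h1, h2, h3⟩, hlast⟩ := hp
      rw [Finset.mem_filter]
      refine ⟨Finset.mem_univ _, ?_, ?_, ?_⟩
      · have := hend p
        rw [h1, hlast, if_pos rfl] at this
        omega
      · intro j hj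
        rw [hups p j hj]
        exact h2 j (by omega)
      · intro j hj
        rw [hups p j hj]
        exact h3 j (by omega)

  -- second: last step is right (false): maps to Wc hh n (m+1)
  · apply Finset.card_bij' (fun p _ => Fin.init p) (fun q _ => Fin.snoc q false)
    · -- hj
      rintro q hq
      rw [Finset.mem_filter] at hq
      obtain ⟨-, h1, h2, h3⟩ := hq
      rw [Finset.mem_filter]
      refine ⟨Finset.mem_univ _, ⟨?_, ?_, ?_⟩, by simp [Fin.snoc_last]⟩
      · rw [ups_snoc_end, h1]
        simp
      · intro j hj
        rcases Nat.lt_succ_iff_lt_or_eq.mp (Nat.lt_succ_of_le hj) with hj' | hj'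
        · rw [ups_snoc _ _ (by omega)]
          exact h2 j (by omega)
        · subst hj'
          rw [ups_snoc_end, h1]
          simp only [if_neg (by simp : ¬ (false = true))]
          omega
      · intro j hj
        rcases Nat.lt_succ_iff_lt_or_eq.mp (Nat.lt_succ_of_le hj) with hj' | hj'
        · rw [ups_snoc _ _ (by omega)]
          exact h3 j (by omega)
        · subst hj'
          rw [ups_snoc_end, h1]
          simp only [if_neg (by simp : ¬ (false = true))]
          omega

    · -- left_inv
      intro p hp
      rw [Finset.mem_filter] at hp
      have h := Fin.snoc_init_self p
      have hlast : p (Fin.last n) = false := by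
        have := hp.2.2
        simpa using this
      rwa [hlast] at h

    · -- right_inv
      intro q _
      exact Fin.init_snoc _ _

    · -- hi
      rintro p hp
      rw [Finset.mem_filter] at hp
      obtain ⟨-, ⟨h1, h2, h3⟩, hlast⟩ := hp
      rw [Bool.not_eq_true] at hlast
      rw [Finset.mem_filter]
      refine ⟨Finset.mem_univ _, ?_, ?_, ?_⟩
      · have := hend p
        rw [h1, hlast] at this
        simp at this
        omega
      · intro j hj
        rw [hups p j hj]
        exact h2 j (by omega)
      · intro j hj
        rw [hups p j hj]
        exact h3 j (by omega)


lemma main_ind (hh : ℕ) : ∀ n m : ℕ, n ≤ 2 * m → 2 * m ≤ n + hh →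
    (Wc hh n m : ℤ) = Rr hh n (m : ℤ) := by
  intro n
  induction n with
  | zero =>
    intro m h1 h2
    rw [Wc_base, Rr_base hh m (by positivity) (by push_cast; omega)]
    by_cases hm : m = 0
    · simp [hm]
    · rw [if_neg hm, if_neg (by exact_mod_cast hm)]
      simp
  | succ n ih =>
    intro m h1 h2
    obtain ⟨m', rfl⟩ : ∃ m', m = m' + 1 := ⟨m - 1, by omega⟩
    rw [Wc_rec hh n m' h1 h2]
    rw [show ((m' + 1 : ℕ) : ℤ) = (m' : ℤ) + 1 by push_cast; ring]
    rw [Rr_pascal]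
    rw [show ((m' : ℤ) + 1) - 1 = (m' : ℤ) by ring]
    have t1 : ((Wc hh n (m' + 1) : ℕ) : ℤ) = Rr hh n ((m' : ℤ) + 1) := by
      by_cases hb : 2 * (m' + 1) = n + hh + 1
      · rw [Wc_zero_high hh n (m' + 1) (by omega),
          Rr_zero_high hh n _ (by push_cast; omega)]
        simp
      · have := ih (m' + 1) (by omega) (by omega)
        rwa [show ((m' + 1 : ℕ) : ℤ) = (m' : ℤ) + 1 by push_cast; ring] at this
    have t2 : ((Wc hh n m' : ℕ) : ℤ) = Rr hh n (m' : ℤ) := by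
      by_cases hb : 2 * (m' + 1) = n + 1
      · rw [Wc_zero_low hh n m' (by omega),
          Rr_zero_low hh n _ (by push_cast; omega)]
        simp
      · exact ih m' (by omega) (by omega)
    push_cast
    push_cast at t1 t2
    rw [t1, t2]

lemma chooseZ_eq_zero (n : ℕ) (j : ℤ) (h : j < 0 ∨ (n : ℤ) < j) : chooseZ n j = 0 := by
  unfold chooseZ
  rw [if_neg]
  omega

lemma dyck_card (N hh : ℕ) : (dyckBdd N hh).card = Wc hh (2 * N) N := rfl

lemma dyck_formula (N hh : ℕ) :
    ((dyckBdd N hh).card : ℤ) = Rr hh (2 * N) (N : ℤ) := by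
  rw [dyck_card]
  exact main_ind hh (2 * N) N (by omega) (by omega)

lemma Rr_to_tsum (N hh : ℕ) :
    Rr hh (2 * N) (N : ℤ)
      = ∑' k : ℤ, (chooseZ (2 * N) ((N : ℤ) - k * ((hh : ℤ) + 2))
          - chooseZ (2 * N) ((N : ℤ) + k * ((hh : ℤ) + 2) + 1)) := by
  unfold Rr
  rw [← (Equiv.neg ℤ).tsum_eq (fun k : ℤ => chooseZ (2 * N) ((N : ℤ) - k * ((hh : ℤ) + 2))
          - chooseZ (2 * N) ((N : ℤ) + k * ((hh : ℤ) + 2) + 1))]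
  apply tsum_congr
  intro k
  simp only [Equiv.neg_apply]
  congr 1
  · congr 1
    ring
  · rw [chooseZ_symm]
    congr 1
    push_cast
    ring

/-- For `N ≥ 1` and `1 ≤ h ≤ N`, the number of Dyck paths of semilength `N` with
maximum height at most `h` is given by the reflection formula
`Σ_{k ∈ ℤ} [C(2N, N - k(h+2))₊ - C(2N, N + k(h+2) + 1)₊]`; moreover this quantity
is monotone nondecreasing in `h`, reaching the Catalan number `C(2N,N)/(N+1)`
when `h ≥ N`. -/
theorem count_bounded_height (N h : ℕ) (hN : 1 ≤ N) (h1 : 1 ≤ h) (hh : h ≤ N) :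
    ((dyckBdd N h).card : ℤ)
        = ∑' k : ℤ, (chooseZ (2 * N) ((N : ℤ) - k * (h + 2))
            - chooseZ (2 * N) ((N : ℤ) + k * (h + 2) + 1)) ∧
    Monotone (fun h' => (dyckBdd N h').card) ∧
    ∀ h', N ≤ h' → (dyckBdd N h').card = (2 * N).choose N / (N + 1) := by
  refine ⟨?_, ?_, ?_⟩
  · rw [dyck_formula N h, Rr_to_tsum N h]
  · intro a b hab
    apply Finset.card_le_card
    intro p hp
    simp only [dyckBdd, Finset.mem_filter, Finset.mem_univ, true_and] at hp ⊢
    exact ⟨hp.1, hp.2.1, fun j hj => le_trans (hp.2.2 j hj) (by omega)⟩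
  · intro h' hh'
    have heq : dyckBdd N h' = dyckBdd N N := by
      ext p
      simp only [dyckBdd, Finset.mem_filter, Finset.mem_univ, true_and]
      constructor
      · rintro ⟨e1, e2, e3⟩
        refine ⟨e1, e2, ?_⟩
        intro j hj
        have hu1 : ups p j ≤ ups p (2 * N) := ups_mono p hj
        have hu2 : ups p j ≤ j := ups_le p j
        rw [e1] at hu1
        omega
      · rintro ⟨e1, e2, e3⟩
        exact ⟨e1, e2, fun j hj => le_trans (e3 j hj) (by omega)⟩
    rw [heq]
    -- evaluate the reflection sum at h = N : only k = 0 contributes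
    have hcard : ((dyckBdd N N).card : ℤ)
        = chooseZ (2 * N) (N : ℤ) - chooseZ (2 * N) ((N : ℤ) - 1) := by
      rw [dyck_formula N N]
      unfold Rr
      rw [tsum_eq_single 0]
      · have a1 : (N : ℤ) + 0 * ((N : ℤ) + 2) = (N : ℤ) := by ring
        have a2 : ((2 * N : ℕ) : ℤ) - 1 - (N : ℤ) + 0 * ((N : ℤ) + 2) = (N : ℤ) - 1 := by
          push_cast; ring
        rw [a1, a2]
      · intro k hk
        have hc : (0 : ℤ) < (N : ℤ) + 2 := by omega
        rcases int_mul_cases k ((N : ℤ) + 2) hc with hcase | hcase | hcase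
        · exact absurd hcase hk
        · rw [chooseZ_eq_zero _ _ (by left; linarith),
            chooseZ_eq_zero _ _ (by left; push_cast; linarith)]
          ring
        · rw [chooseZ_eq_zero _ _ (by right; push_cast; linarith),
            chooseZ_eq_zero _ _ (by right; push_cast; linarith)]
          ring
    have hc1 : chooseZ (2 * N) (N : ℤ) = ((2 * N).choose N : ℤ) := by
      unfold chooseZ
      have e : ((N : ℤ)).toNat = N := by omega
      rw [if_pos (by omega), e]
    have hc2 : chooseZ (2 * N) ((N : ℤ) - 1) = ((2 * N).choose (N - 1) : ℤ) := by
      unfold chooseZ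
      have e : ((N : ℤ) - 1).toNat = N - 1 := by omega
      rw [if_pos (by omega), e]
    rw [hc1, hc2] at hcard
    have hle : (2 * N).choose (N - 1) ≤ (2 * N).choose N := by
      have h2 : (2 * N) / 2 = N := by omega
      have := Nat.choose_le_middle (N - 1) (2 * N)
      rwa [h2] at this
    have hcardN : (dyckBdd N N).card
        = (2 * N).choose N - (2 * N).choose (N - 1) := by omega
    rw [hcardN]
    -- now show B - C = B / (N+1)
    have key : (2 * N).choose (N - 1) * (N + 1) = (2 * N).choose N * N := by
      have := Nat.choose_succ_right_eq (2 * N) (N - 1)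
      have e1 : N - 1 + 1 = N := by omega
      have e2 : 2 * N - (N - 1) = N + 1 := by omega
      rw [e1, e2] at this
      omega
    symm
    apply Nat.div_eq_of_eq_mul_left (by omega)
    rw [Nat.sub_mul, key]
    have e3 : (2 * N).choose N * (N + 1) = (2 * N).choose N * N + (2 * N).choose N := by
      ring
    rw [e3]
    exact (Nat.add_sub_cancel_left _ _).symm
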